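/- arXiv:math/0507379 — 2 statements merged into one kernel-verified Lean document; each statement's English description precedes it below -/
import Mathlib

section
/- Let ABCD be a convex quadrilateral in the Euclidean plane whose diagonals meet at a point O, where A, O, B are not collinear, and let φ = ∠AOB. Then (dist A B + dist B D + dist D C + dist C A) / (2(π + φ)) < (dist A B + dist B C + dist C D + dist D A) / (2π). -/
/-!
Seen from `O`, the sides `BC` and `DA` subtend the angle `π - φ`. A chord `XY` seen from `O` under
the angle `θ` satisfies `θ (XO + OY) ≤ π XY` (law of cosines plus Jordan's inequality
`sin (θ / 2) ≥ θ / π`), so `(π - φ)(AC + BD) ≤ π (BC + DA)`. Since the diagonals are strictly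
shorter than the perimeter, this rearranges to the claim.
-/

open Real EuclideanGeometry

namespace EuclideanGeometry

variable {V P : Type*} [NormedAddCommGroup V] [InnerProductSpace ℝ V] [MetricSpace P]
  [NormedAddTorsor V P]

theorem dist_add_dist_mul_sin_half_angle_le (X O Y : P) :
    (dist X O + dist O Y) * sin (∠ X O Y / 2) ≤ dist X Y := by
  set θ := ∠ X O Y
  have hsin : 0 ≤ sin (θ / 2) :=
    sin_nonneg_of_nonneg_of_le_pi (by linarith [angle_nonneg X O Y])
      (by linarith [angle_le_pi X O Y, pi_pos])
  have hsin_sq : sin (θ / 2) ^ 2 = (1 - cos θ) / 2 := by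
    rw [sin_sq_eq_half_sub, mul_div_cancel₀ θ two_ne_zero]; ring
  have hcos : dist X Y ^ 2 = dist X O ^ 2 + dist O Y ^ 2 - 2 * dist X O * dist O Y * cos θ := by
    rw [sq, sq, sq, law_cos X O Y, dist_comm Y O]
  refine (pow_le_pow_iff_left₀ (by positivity) dist_nonneg two_ne_zero).1 ?_
  rw [mul_pow, hsin_sq, hcos]
  nlinarith [mul_nonneg (sq_nonneg (dist X O - dist O Y)) (by linarith [neg_one_le_cos θ] :
    (0 : ℝ) ≤ 1 + cos θ)]

theorem angle_mul_dist_add_dist_le (X O Y : P) :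
    ∠ X O Y * (dist X O + dist O Y) ≤ π * dist X Y := by
  set θ := ∠ X O Y
  have hjordan : θ / π ≤ sin (θ / 2) := by
    have := mul_le_sin (x := θ / 2) (by linarith [angle_nonneg X O Y])
      (by linarith [angle_le_pi X O Y])
    rwa [div_mul_div_comm, mul_comm π, mul_div_mul_left θ π two_ne_zero] at this
  calc θ * (dist X O + dist O Y) = π * (θ / π * (dist X O + dist O Y)) := by
        field_simp
    _ ≤ π * ((dist X O + dist O Y) * sin (θ / 2)) := by
        rw [mul_comm (dist X O + dist O Y)]
        gcongr
    _ ≤ π * dist X Y := by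
        gcongr
        exact dist_add_dist_mul_sin_half_angle_le X O Y

theorem pi_sub_angle_mul_dist_add_dist_le {A B C D O : P} (hAOC : Sbtw ℝ A O C)
    (hBOD : Sbtw ℝ B O D) :
    (π - ∠ A O B) * (dist A C + dist B D) ≤ π * (dist B C + dist D A) := by
  have hBOC : ∠ B O C = π - ∠ A O B := by
    linarith [angle_add_angle_eq_pi_of_angle_eq_pi B hAOC.angle₁₂₃_eq_pi, angle_comm B O A]
  have hDOA : ∠ D O A = π - ∠ A O B := by
    linarith [angle_add_angle_eq_pi_of_angle_eq_pi A hBOD.angle₁₂₃_eq_pi, angle_comm D O A]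
  have hBC := angle_mul_dist_add_dist_le B O C
  have hDA := angle_mul_dist_add_dist_le D O A
  rw [hBOC] at hBC
  rw [hDOA] at hDA
  rw [← hAOC.wbtw.dist_add_dist, ← hBOD.wbtw.dist_add_dist, dist_comm O D, dist_comm A O]
  linear_combination hBC + hDA

theorem dist_lt_dist_add_dist_of_wbtw_of_not_collinear {A B C O : P} (hAOC : Wbtw ℝ A O C)
    (hAOB : ¬Collinear ℝ ({A, O, B} : Set P)) :
    dist A C < dist A B + dist B C := by
  refine dist_lt_dist_add_dist_iff.2 fun hABC => hAOB ?_
  have h := collinear_insert_insert_of_mem_affineSpan_pair hAOC.mem_affineSpan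
    hABC.mem_affineSpan
  refine h.subset fun x hx => ?_
  simp only [Set.mem_insert_iff, Set.mem_singleton_iff] at hx ⊢
  tauto

end EuclideanGeometry

/-- **Lemma 5** of Nazarov–Petrov: for a convex quadrilateral `ABCD` in the plane whose
diagonals meet at `O`, with `φ = ∠AOB`, one has
`(AB + BD + DC + CA)/(2(π + φ)) < (AB + BC + CD + DA)/(2π)`. -/
theorem lemma5_strict (A B C D O : EuclideanSpace ℝ (Fin 2))
    (hAOC : Sbtw ℝ A O C) (hBOD : Sbtw ℝ B O D)
    (hncol : ¬ Collinear ℝ ({A, O, B} : Set (EuclideanSpace ℝ (Fin 2)))) :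
    (dist A B + dist B D + dist D C + dist C A) / (2 * (π + ∠ A O B)) <
      (dist A B + dist B C + dist C D + dist D A) / (2 * π) := by
  have hφ : 0 < ∠ A O B := angle_pos_of_not_collinear hncol
  have hAC := dist_lt_dist_add_dist_of_wbtw_of_not_collinear hAOC.wbtw hncol
  have hdiag : dist A C + dist B D < dist A B + dist B C + dist C D + dist D A := by
    linarith [dist_triangle A D C, dist_triangle B C D, dist_triangle B A D, dist_comm A B,
      dist_comm A D, dist_comm C D]
  have hkey := pi_sub_angle_mul_dist_add_dist_le hAOC hBOD
  rw [div_lt_div_iff₀ (by positivity) (by positivity), dist_comm D C, dist_comm C A]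
  nlinarith [mul_lt_mul_of_pos_left hdiag hφ, pi_pos]
end

section
/- (Spherical analogue of the triangle DNA inequality.) Let a, b, c be the side lengths of a nondegenerate spherical triangle with a + b + c < 2π, with spherical angles α, β, γ opposite a, b, c respectively, and let ℰ = α + β + γ − π be its spherical excess. Then (a + c) · (2π − ℰ) < (a + b + c) · (2π − β). -/
/-!
Subtracting `(a + c)(2π - β)` from both sides, the claim reads `(a + c)(π - α - γ) < b(2π - β)`,
which is clear when `α + γ ≥ π`. Otherwise `a + c < π`, since `a + c ≥ π` forces
`cos α + cos γ ≤ 0`; the excess is positive, so `π - α - γ < β`; and it remains to show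
`β (a + c) ≤ π b`. By the half-angle identity
`sin² (b/2) = sin² ((a+c)/2) sin² (β/2) + sin² ((a-c)/2) cos² (β/2)` we have
`sin (b/2) ≥ sin ((a+c)/2) sin (β/2)`, and the right-hand side is at least `sin (β (a+c) / 2π)`
because `sin x sin y ≥ sin (2xy/π)` on `[0, π/2]²`.
-/

open Real Set

/-- The spherical angle opposite the side of length `a` in a spherical triangle with side
lengths `a`, `b`, `c`, given by the spherical law of cosines. -/
noncomputable def sphAngle (a b c : ℝ) : ℝ :=
  Real.arccos ((Real.cos a - Real.cos b * Real.cos c) / (Real.sin b * Real.sin c))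

theorem concaveOn_sin_mul_sub_sin_mul {k l : ℝ} (hl₀ : 0 ≤ l) (hl₁ : l ≤ 1) (hlk : l ≤ k) :
    ConcaveOn ℝ (Icc 0 (π / 2)) (fun s ↦ sin s * k - sin (l * s)) := by
  have hsin (s : ℝ) : HasDerivAt (fun s ↦ sin (l * s)) (cos (l * s) * l) s := by
    simpa using ((hasDerivAt_id s).const_mul l).sin
  have hcos (s : ℝ) : HasDerivAt (fun s ↦ cos (l * s)) (-sin (l * s) * l) s := by
    simpa using ((hasDerivAt_id s).const_mul l).cos
  refine concaveOn_of_hasDerivWithinAt2_nonpos (convex_Icc _ _) (by fun_prop)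
    (fun s _ ↦ (((hasDerivAt_sin s).mul_const k).sub (hsin s)).hasDerivWithinAt)
    (fun s _ ↦ (((hasDerivAt_cos s).mul_const k).sub ((hcos s).mul_const l)).hasDerivWithinAt) ?_
  intro s hs
  rw [interior_Icc] at hs
  obtain ⟨hs₀, hs₁⟩ := hs
  have hls : sin (l * s) ≤ sin s :=
    sin_le_sin_of_le_of_le_pi_div_two (by nlinarith [pi_pos]) hs₁.le (by nlinarith)
  have : 0 ≤ sin (l * s) := sin_nonneg_of_nonneg_of_le_pi (by positivity) (by nlinarith [pi_pos])
  have : 0 ≤ sin s := sin_nonneg_of_nonneg_of_le_pi hs₀.le (by linarith [pi_pos])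
  have : l * l * sin (l * s) ≤ k * sin s := calc
    l * l * sin (l * s) ≤ 1 * l * sin s := by gcongr
    _ ≤ k * sin s := by rw [one_mul]; gcongr
  linarith

theorem sin_two_mul_mul_div_pi_le_sin_mul_sin {x y : ℝ} (hx₀ : 0 ≤ x) (hx : x ≤ π / 2)
    (hy₀ : 0 ≤ y) (hy : y ≤ π / 2) : sin (2 * x * y / π) ≤ sin x * sin y := by
  have hl₁ : 2 / π * y ≤ 1 := by
    rw [div_mul_eq_mul_div, div_le_one pi_pos]; linarith
  -- `s ↦ sin s * sin y - sin (2 / π * y * s)` is concave on `[0, π/2]` and vanishes at both ends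
  have hf := concaveOn_sin_mul_sub_sin_mul (by positivity) hl₁ (mul_le_sin hy₀ hy)
  have := hf.ge_on_segment (x := 0) (y := π / 2) ⟨le_rfl, by positivity⟩ ⟨by positivity, le_rfl⟩
    (z := x) (by rw [segment_eq_Icc (by positivity)]; exact ⟨hx₀, hx⟩)
  have hy' : 2 / π * y * (π / 2) = y := by field_simp
  simp only [sin_zero, zero_mul, mul_zero, sin_pi_div_two, one_mul, hy', sub_self,
    min_self] at this
  rw [show 2 * x * y / π = 2 / π * y * x by ring]
  linarith

theorem sin_sq_half_eq_of_cos_eq {a b c β : ℝ}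
    (h : cos b = cos a * cos c + sin a * sin c * cos β) :
    sin (b / 2) ^ 2 =
      sin ((a + c) / 2) ^ 2 * sin (β / 2) ^ 2 + sin ((a - c) / 2) ^ 2 * cos (β / 2) ^ 2 := by
  have hsin (x : ℝ) : sin (x / 2) ^ 2 = (1 - cos x) / 2 := by
    rw [sin_sq_eq_half_sub]; ring_nf
  have hcos : cos (β / 2) ^ 2 = (1 + cos β) / 2 := by
    rw [cos_sq]; ring_nf
  simp only [hsin, hcos, cos_add, cos_sub, h]
  ring

theorem mul_add_le_pi_mul_of_cos_eq {a b c β : ℝ} (hac₀ : 0 ≤ a + c) (hac : a + c ≤ π)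
    (hb₀ : 0 ≤ b) (hb : b ≤ π) (hβ₀ : 0 ≤ β) (hβ : β ≤ π)
    (h : cos b = cos a * cos c + sin a * sin c * cos β) : β * (a + c) ≤ π * b := by
  have hπ := pi_pos
  have hhalf {x : ℝ} (hx₀ : 0 ≤ x) (hx : x ≤ π) : 0 ≤ sin (x / 2) :=
    sin_nonneg_of_nonneg_of_le_pi (by linarith) (by linarith)
  have hprod : sin ((a + c) / 2) * sin (β / 2) ≤ sin (b / 2) := by
    refine (pow_le_pow_iff_left₀ (mul_nonneg (hhalf hac₀ hac) (hhalf hβ₀ hβ))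
      (hhalf hb₀ hb) two_ne_zero).1 ?_
    rw [mul_pow, sin_sq_half_eq_of_cos_eq h]
    exact le_add_of_nonneg_right (by positivity)
  have hjordan := sin_two_mul_mul_div_pi_le_sin_mul_sin (x := (a + c) / 2) (y := β / 2)
    (by linarith) (by linarith) (by linarith) (by linarith)
  have hmem : 2 * ((a + c) / 2) * (β / 2) / π ∈ Icc (-(π / 2)) (π / 2) := by
    constructor
    · have : 0 ≤ 2 * ((a + c) / 2) * (β / 2) / π := by positivity
      linarith
    · rw [div_le_iff₀ hπ]; nlinarith
  have := (strictMonoOn_sin.le_iff_le hmem ⟨by linarith, by linarith⟩).1 (hjordan.trans hprod)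
  rw [div_le_iff₀ hπ] at this
  linarith

structure IsSphTriangle (a b c : ℝ) : Prop where
  lt_add₁ : a < b + c
  lt_add₂ : b < c + a
  lt_add₃ : c < a + b
  add_lt : a + b + c < 2 * π

/-- The Gram determinant of the unit vectors at the vertices of the triangle. -/
noncomputable def sphDet (a b c : ℝ) : ℝ :=
  1 - cos a ^ 2 - cos b ^ 2 - cos c ^ 2 + 2 * cos a * cos b * cos c

theorem sphDet_rotate (a b c : ℝ) : sphDet b c a = sphDet a b c := by
  unfold sphDet; ring

theorem sin_sphAngle_mul {a b c : ℝ} (h : 0 < sin b * sin c) :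
    sin (sphAngle a b c) * (sin b * sin c) = √(sphDet a b c) := by
  rw [sphAngle, sin_arccos]
  conv_lhs => arg 2; rw [← sqrt_sq h.le]
  rw [← sqrt_mul' _ (sq_nonneg _)]
  congr 1
  rw [sub_mul, one_mul, ← mul_pow, div_mul_cancel₀ _ h.ne', sphDet]
  linear_combination sin c ^ 2 * sin_sq b + (1 - cos b ^ 2) * sin_sq c

namespace IsSphTriangle

variable {a b c : ℝ}

theorem rotate (h : IsSphTriangle a b c) : IsSphTriangle b c a :=
  ⟨h.lt_add₂, h.lt_add₃, h.lt_add₁, by linarith [h.add_lt]⟩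

theorem pos (h : IsSphTriangle a b c) : 0 < a := by linarith [h.lt_add₂, h.lt_add₃]

theorem lt_pi (h : IsSphTriangle a b c) : a < π := by linarith [h.lt_add₁, h.add_lt]

theorem sin_pos (h : IsSphTriangle a b c) : 0 < sin a := sin_pos_of_pos_of_lt_pi h.pos h.lt_pi

theorem cos_lt_one (h : IsSphTriangle a b c) : cos a < 1 := by
  simpa using cos_lt_cos_of_nonneg_of_le_pi le_rfl h.lt_pi.le h.pos

theorem cos_add_lt_cos (h : IsSphTriangle a b c) : cos (b + c) < cos a := by
  rcases le_or_gt (b + c) π with hbc | hbc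
  · exact cos_lt_cos_of_nonneg_of_le_pi h.pos.le hbc h.lt_add₁
  · rw [← cos_two_pi_sub]
    exact cos_lt_cos_of_nonneg_of_le_pi h.pos.le (by linarith) (by linarith [h.add_lt])

theorem cos_lt_cos_sub (h : IsSphTriangle a b c) : cos a < cos (b - c) := by
  rw [← cos_abs (b - c)]
  exact cos_lt_cos_of_nonneg_of_le_pi (abs_nonneg _) h.lt_pi.le
    (abs_sub_lt_iff.2 ⟨by linarith [h.lt_add₂], by linarith [h.lt_add₃]⟩)

theorem abs_cos_sub_cos_mul_cos_div_lt_one (h : IsSphTriangle a b c) :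
    |(cos a - cos b * cos c) / (sin b * sin c)| < 1 := by
  have hs : 0 < sin b * sin c := mul_pos h.rotate.sin_pos h.rotate.rotate.sin_pos
  rw [abs_div, abs_of_pos hs, div_lt_one hs, abs_lt]
  constructor
  · linarith [h.cos_add_lt_cos, cos_add b c]
  · linarith [h.cos_lt_cos_sub, cos_sub b c]

theorem sphAngle_pos (h : IsSphTriangle a b c) : 0 < sphAngle a b c :=
  arccos_pos.2 (abs_lt.1 h.abs_cos_sub_cos_mul_cos_div_lt_one).2

theorem sphAngle_lt_pi (h : IsSphTriangle a b c) : sphAngle a b c < π :=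
  arccos_lt_pi.2 (abs_lt.1 h.abs_cos_sub_cos_mul_cos_div_lt_one).1

theorem cos_sphAngle_mul (h : IsSphTriangle a b c) :
    cos (sphAngle a b c) * (sin b * sin c) = cos a - cos b * cos c := by
  obtain ⟨h₁, h₂⟩ := abs_lt.1 h.abs_cos_sub_cos_mul_cos_div_lt_one
  have hs : sin b * sin c ≠ 0 := (mul_pos h.rotate.sin_pos h.rotate.rotate.sin_pos).ne'
  rw [sphAngle, cos_arccos h₁.le h₂.le, div_mul_cancel₀ _ hs]

theorem pi_lt_sphAngle_add_sphAngle_add_sphAngle (h : IsSphTriangle a b c) :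
    π < sphAngle a b c + sphAngle b c a + sphAngle c a b := by
  set α := sphAngle a b c
  set β := sphAngle b c a
  set γ := sphAngle c a b
  have hsa := h.sin_pos
  have hsb := h.rotate.sin_pos
  have hsc := h.rotate.rotate.sin_pos
  have hβ : sin β * (sin c * sin a) = √(sphDet a b c) := by
    rw [sin_sphAngle_mul (by positivity), sphDet_rotate]
  have hγ : sin γ * (sin a * sin b) = √(sphDet a b c) := by
    rw [sin_sphAngle_mul (by positivity), ← sphDet_rotate c a b]
  have hD : 0 < sphDet a b c := by
    rw [← sqrt_pos, ← hβ]
    exact mul_pos (sin_pos_of_pos_of_lt_pi h.rotate.sphAngle_pos h.rotate.sphAngle_lt_pi)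
      (by positivity)
  have hS : 0 < sin a ^ 2 * sin b * sin c := by positivity
  -- the polar law of cosines `cos α + cos β cos γ = cos a sin β sin γ`, cleared of denominators
  have hcos_mul :
      (cos α + cos β * cos γ) * (sin a ^ 2 * sin b * sin c) = cos a * sphDet a b c := by
    rw [sphDet]
    linear_combination sin a ^ 2 * h.cos_sphAngle_mul +
      cos γ * (sin a * sin b) * h.rotate.cos_sphAngle_mul +
      (cos b - cos c * cos a) * h.rotate.rotate.cos_sphAngle_mul +
      (cos a - cos b * cos c) * sin_sq a
  have hsin_mul : sin β * sin γ * (sin a ^ 2 * sin b * sin c) = sphDet a b c := by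
    calc sin β * sin γ * (sin a ^ 2 * sin b * sin c)
        = (sin β * (sin c * sin a)) * (sin γ * (sin a * sin b)) := by ring
      _ = sphDet a b c := by rw [hβ, hγ, mul_self_sqrt hD.le]
  have hcos : cos α < cos (π - (β + γ)) := by
    rw [cos_pi_sub, cos_add]
    refine lt_of_mul_lt_mul_right ?_ hS.le
    nlinarith [mul_lt_mul_of_pos_right h.cos_lt_one hD]
  by_contra! hle
  exact hcos.not_ge (cos_le_cos_of_nonneg_of_le_pi h.sphAngle_pos.le
    (by linarith [h.rotate.sphAngle_pos, h.rotate.rotate.sphAngle_pos]) (by linarith))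

theorem pi_le_sphAngle_add_sphAngle (h : IsSphTriangle a b c) (hac : π ≤ a + c) :
    π ≤ sphAngle a b c + sphAngle c a b := by
  set α := sphAngle a b c
  set γ := sphAngle c a b
  have hS : 0 < sin a * sin b * sin c :=
    mul_pos (mul_pos h.sin_pos h.rotate.sin_pos) h.rotate.rotate.sin_pos
  have hcos_mul : (cos α + cos γ) * (sin a * sin b * sin c) =
      sin (a + c) * (cos (a - c) - cos b) := by
    rw [sin_add, cos_sub]
    linear_combination sin a * h.cos_sphAngle_mul + sin c * h.rotate.rotate.cos_sphAngle_mul -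
      sin c * cos c * sin_sq a - sin a * cos a * sin_sq c
  have hsin : sin (a + c) ≤ 0 := by
    rw [← sin_sub_two_pi]
    exact sin_nonpos_of_nonpos_of_neg_pi_le (by linarith [h.add_lt, h.rotate.pos])
      (by linarith)
  have hcos_b : cos b < cos (a - c) := by
    rw [← cos_neg (a - c), neg_sub]
    exact h.rotate.cos_lt_cos_sub
  have hcos : cos γ ≤ cos (π - α) := by
    rw [cos_pi_sub]
    have : (cos α + cos γ) * (sin a * sin b * sin c) ≤ 0 := by
      rw [hcos_mul]
      exact mul_nonpos_of_nonpos_of_nonneg hsin (by linarith)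
    nlinarith
  by_contra! hlt
  exact hcos.not_gt (cos_lt_cos_of_nonneg_of_le_pi h.rotate.rotate.sphAngle_pos.le
    (by linarith [h.sphAngle_pos]) (by linarith))

end IsSphTriangle

theorem spherical_triangle_dna_general (a b c : ℝ)
    (habc : a < b + c) (hbca : b < c + a) (hcab : c < a + b)
    (hsum : a + b + c < 2 * π) :
    (a + c) * (2 * π - (sphAngle a b c + sphAngle b c a + sphAngle c a b - π)) <
      (a + b + c) * (2 * π - sphAngle b c a) := by
  have h : IsSphTriangle a b c := ⟨habc, hbca, hcab, hsum⟩
  have hexcess := h.pi_lt_sphAngle_add_sphAngle_add_sphAngle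
  have hβ₀ := h.rotate.sphAngle_pos
  have hβ := h.rotate.sphAngle_lt_pi
  have hb := h.rotate.pos
  have hac₀ : 0 < a + c := add_pos h.pos h.rotate.rotate.pos
  set α := sphAngle a b c
  set β := sphAngle b c a
  set γ := sphAngle c a b
  suffices (a + c) * (π - (α + γ)) < b * (2 * π - β) by linear_combination this
  have hb_pos : 0 < b * (2 * π - β) := mul_pos hb (by linarith)
  rcases le_or_gt π (α + γ) with hαγ | hαγ
  · exact (mul_nonpos_of_nonneg_of_nonpos hac₀.le (by linarith)).trans_lt hb_pos
  · have hac : a + c < π := lt_of_not_ge fun hac ↦ hαγ.not_ge (h.pi_le_sphAngle_add_sphAngle hac)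
    have hβac := mul_add_le_pi_mul_of_cos_eq hac₀.le hac.le hb.le h.rotate.lt_pi.le hβ₀.le hβ.le
      (by linear_combination -h.rotate.cos_sphAngle_mul)
    calc (a + c) * (π - (α + γ)) < (a + c) * β := by gcongr; linarith
      _ ≤ π * b := by linarith
      _ < b * (2 * π - β) := by nlinarith [mul_pos hb (sub_pos.2 hβ)]

/-- **Lemma 2s** of Nazarov–Petrov (spherical triangle DNA inequality): for a nondegenerate
spherical triangle with side lengths `a`, `b`, `c` (with `a + b + c < 2π`), angle `β` opposite
`b` and spherical excess `ℰ = α + β + γ − π`, one has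
`(a + c)(2π − ℰ) < (a + b + c)(2π − β)`. -/
theorem spherical_triangle_dna (a b c : ℝ)
    (ha : 0 < a) (hb : 0 < b) (hc : 0 < c)
    (habc : a < b + c) (hbca : b < c + a) (hcab : c < a + b)
    (hsum : a + b + c < 2 * π) :
    (a + c) * (2 * π - (sphAngle a b c + sphAngle b c a + sphAngle c a b - π)) <
      (a + b + c) * (2 * π - sphAngle b c a) :=
  spherical_triangle_dna_general a b c habc hbca hcab hsum
end
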